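/- Let k ≥ 1 and let M be a 2^k × 2^k circulant matrix over the polynomial ring F_2[x]. Then M can be transformed into an upper-triangular matrix using at most k·2^k elementary row/column addition operations: there exist lists L_row and L_col of pairs (i,j) with i ≠ j, with total length |L_row| + |L_col| = k·2^k, such that the product of the corresponding type-3 elementary matrices E(i+j) applied on the left (for L_row) and on the right (for L_col) of M yields an upper-triangular matrix (all entries strictly below the diagonal are zero). -/

import Mathlib

/-!
Write a `2n × 2n` circulant matrix as `[[A, B], [B, A]]`. Adding the top half of the rows to the
bottom half and then the right half of the columns to the left half costs `2n` operations and,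
in characteristic two, yields `[[A + B, B], [0, A + B]]`, where `A + B` is again circulant, of
size `n`. Triangularizing `A + B` with the same operations on both diagonal blocks doubles their
number, so `T(2n) = 2 T(n) + 2n` and `T(2^k) = k 2^k`.
-/

/-- The type-3 elementary matrix `E(i+j) = I + e_{ij}` over `F_2[x]`. -/
noncomputable def elemAddPoly (n : ℕ) (i j : Fin n) : Matrix (Fin n) (Fin n) (Polynomial (ZMod 2)) :=
  1 + Matrix.single i j 1

open Matrix

section Transvections

variable {R : Type*} [CommRing R] {ι κ : Type*} [DecidableEq ι] [DecidableEq κ]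
  [Fintype ι] [Fintype κ]

noncomputable def transvectionProd (L : List (ι × ι)) : Matrix ι ι R :=
  (L.map fun p => transvection p.1 p.2 1).prod

@[simp]
lemma transvectionProd_nil : transvectionProd (R := R) ([] : List (ι × ι)) = 1 := rfl

@[simp]
lemma transvectionProd_cons (p : ι × ι) (L : List (ι × ι)) :
    transvectionProd (R := R) (p :: L) = transvection p.1 p.2 1 * transvectionProd L := rfl

@[simp]
lemma transvectionProd_append (L L' : List (ι × ι)) :
    transvectionProd (R := R) (L ++ L') = transvectionProd L * transvectionProd L' := by
  simp [transvectionProd]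

lemma transvectionProd_map_equiv (e : ι ≃ κ) (L : List (ι × ι)) :
    transvectionProd (R := R) (L.map (Prod.map e e)) = reindex e e (transvectionProd L) := by
  induction L with
  | nil => simp
  | cons p L ih =>
    have : transvection (e p.1) (e p.2) (1 : R) = reindex e e (transvection p.1 p.2 1) := by
      simp [transvection, reindex_apply, submatrix_add]
    simp only [List.map_cons, transvectionProd_cons, Prod.map_fst, Prod.map_snd, ih, this,
      ← coe_reindexAlgEquiv R R, ← map_mul]

lemma transvectionProd_map_inl (L : List (ι × ι)) :
    transvectionProd (R := R) (L.map (Prod.map Sum.inl Sum.inl) : List ((ι ⊕ κ) × (ι ⊕ κ))) =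
      fromBlocks (transvectionProd L) 0 0 1 := by
  induction L with
  | nil => simp
  | cons p L ih =>
    have : transvection (Sum.inl p.1 : ι ⊕ κ) (Sum.inl p.2) (1 : R) =
        fromBlocks (transvection p.1 p.2 1) 0 0 1 := by
      ext (a | a) (b | b) <;> simp [transvection, single_apply, one_apply]
    simp [ih, this, fromBlocks_multiply]

lemma transvectionProd_map_inr (L : List (κ × κ)) :
    transvectionProd (R := R) (L.map (Prod.map Sum.inr Sum.inr) : List ((ι ⊕ κ) × (ι ⊕ κ))) =
      fromBlocks 1 0 0 (transvectionProd L) := by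
  induction L with
  | nil => simp
  | cons p L ih =>
    have : transvection (Sum.inr p.1 : ι ⊕ κ) (Sum.inr p.2) (1 : R) =
        fromBlocks 1 0 0 (transvection p.1 p.2 1) := by
      ext (a | a) (b | b) <;> simp [transvection, single_apply, one_apply]
    simp [ih, this, fromBlocks_multiply]

lemma transvectionProd_map_inr_inl (l : List ι) :
    transvectionProd (R := R) (l.map fun i => ((Sum.inr i, Sum.inl i) : (ι ⊕ ι) × (ι ⊕ ι))) =
      fromBlocks 1 0 (l.map fun i => single i i 1).sum 1 := by
  induction l with
  | nil => simp
  | cons i l ih =>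
    have : transvection (Sum.inr i : ι ⊕ ι) (Sum.inl i) (1 : R) =
        fromBlocks 1 0 (single i i 1) 1 := by
      ext (a | a) (b | b) <;> simp [transvection, single_apply, one_apply]
    simp [ih, this, fromBlocks_multiply]

end Transvections

section Circulant

variable {α : Type*} {n : ℕ}

lemma Fin.natAdd_sub_natAdd (a b : Fin n) :
    Fin.natAdd n a - Fin.natAdd n b = Fin.castAdd n a - Fin.castAdd n b := by
  ext
  simp only [Fin.val_sub, Fin.val_natAdd, Fin.val_castAdd]
  congr 1
  omega

lemma Fin.natAdd_sub_castAdd (a b : Fin n) :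
    Fin.natAdd n a - Fin.castAdd n b = Fin.castAdd n a - Fin.natAdd n b := by
  ext
  simp only [Fin.val_sub, Fin.val_natAdd, Fin.val_castAdd]
  rw [show n + n - b + (n + a) = n + n - (n + b) + a + (n + n) by omega, Nat.add_mod_right]

lemma reindex_circulant_fin_add (v : Fin (n + n) → α) :
    reindex finSumFinEquiv.symm finSumFinEquiv.symm (circulant v) =
      fromBlocks ((circulant v).submatrix (Fin.castAdd n) (Fin.castAdd n))
        ((circulant v).submatrix (Fin.castAdd n) (Fin.natAdd n))
        ((circulant v).submatrix (Fin.castAdd n) (Fin.natAdd n))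
        ((circulant v).submatrix (Fin.castAdd n) (Fin.castAdd n)) := by
  ext (a | a) (b | b) <;>
    simp only [reindex_apply, Equiv.symm_symm, submatrix_apply, finSumFinEquiv_apply_left,
      finSumFinEquiv_apply_right, fromBlocks_apply₁₁, fromBlocks_apply₁₂, fromBlocks_apply₂₁,
      fromBlocks_apply₂₂, circulant_apply, Fin.natAdd_sub_natAdd, Fin.natAdd_sub_castAdd]

lemma circulant_submatrix_castAdd_add [AddCommMagma α] (v : Fin (n + n) → α) :
    (circulant v).submatrix (Fin.castAdd n) (Fin.castAdd n) +
        (circulant v).submatrix (Fin.castAdd n) (Fin.natAdd n) =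
      circulant fun d => v (Fin.castAdd n d) + v (Fin.natAdd n d) := by
  ext a b
  simp only [Matrix.add_apply, submatrix_apply, circulant_apply]
  have hlt : Fin.castAdd n a < Fin.natAdd n b := by
    rw [Fin.lt_def, Fin.val_castAdd, Fin.val_natAdd]; omega
  have hval_cn := Fin.coe_sub_iff_lt.mpr hlt
  -- `a - b` and `a - b - n` in `Fin (n + n)` are the two lifts of `a - b : Fin n`, in an order
  -- that depends on whether `b ≤ a`.
  rcases le_or_gt b a with hba | hab
  · have hba' : Fin.castAdd n b ≤ Fin.castAdd n a := by
      rw [Fin.le_def, Fin.val_castAdd, Fin.val_castAdd]; exact hba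
    have hval := Fin.coe_sub_iff_le.mpr hba
    have hval_cc := Fin.coe_sub_iff_le.mpr hba'
    rw [show Fin.castAdd n a - Fin.castAdd n b = Fin.castAdd n (a - b) by
          ext; simp only [Fin.val_castAdd] at *; omega,
        show Fin.castAdd n a - Fin.natAdd n b = Fin.natAdd n (a - b) by
          ext; simp only [Fin.val_castAdd, Fin.val_natAdd] at *; omega]
  · have hab' : Fin.castAdd n a < Fin.castAdd n b := by
      rw [Fin.lt_def, Fin.val_castAdd, Fin.val_castAdd]; exact hab
    have hval := Fin.coe_sub_iff_lt.mpr hab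
    have hval_cc := Fin.coe_sub_iff_lt.mpr hab'
    rw [show Fin.castAdd n a - Fin.castAdd n b = Fin.natAdd n (a - b) by
          ext; simp only [Fin.val_castAdd, Fin.val_natAdd] at *; omega,
        show Fin.castAdd n a - Fin.natAdd n b = Fin.castAdd n (a - b) by
          ext; simp only [Fin.val_castAdd, Fin.val_natAdd] at *; omega, add_comm]

end Circulant

section Doubling

variable {R : Type*} [CommRing R] {n : ℕ}

def blockDiagPairs (L : List (Fin n × Fin n)) : List (Fin (n + n) × Fin (n + n)) :=
  L.map (fun p => (Fin.castAdd n p.1, Fin.castAdd n p.2)) ++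
    L.map (fun p => (Fin.natAdd n p.1, Fin.natAdd n p.2))

def shearPairs (n : ℕ) : List (Fin (n + n) × Fin (n + n)) :=
  (List.finRange n).map fun i => (Fin.natAdd n i, Fin.castAdd n i)

lemma transvectionProd_blockDiagPairs (L : List (Fin n × Fin n)) :
    transvectionProd (R := R) (blockDiagPairs L) =
      reindex finSumFinEquiv finSumFinEquiv
        (fromBlocks (transvectionProd L) 0 0 (transvectionProd L)) := by
  have : blockDiagPairs L =
      (L.map (Prod.map Sum.inl Sum.inl) ++ L.map (Prod.map Sum.inr Sum.inr)).map
        (Prod.map finSumFinEquiv finSumFinEquiv) := by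
    simp [blockDiagPairs, Function.comp_def, Prod.map]
  rw [this, transvectionProd_map_equiv, transvectionProd_append, transvectionProd_map_inl,
    transvectionProd_map_inr, fromBlocks_multiply]
  simp

lemma transvectionProd_shearPairs :
    transvectionProd (R := R) (shearPairs n) =
      reindex finSumFinEquiv finSumFinEquiv (fromBlocks 1 0 1 1) := by
  have : shearPairs n =
      ((List.finRange n).map fun i =>
        ((Sum.inr i, Sum.inl i) : (Fin n ⊕ Fin n) × (Fin n ⊕ Fin n))).map
          (Prod.map finSumFinEquiv finSumFinEquiv) := by
    simp [shearPairs, Function.comp_def, Prod.map]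
  rw [this, transvectionProd_map_equiv, transvectionProd_map_inr_inl, ← Fin.sum_univ_def,
    sum_single_one]

lemma ne_of_mem_blockDiagPairs {L : List (Fin n × Fin n)} (hL : ∀ p ∈ L, p.1 ≠ p.2) :
    ∀ p ∈ blockDiagPairs L, p.1 ≠ p.2 := by
  simp only [blockDiagPairs, List.mem_append, List.mem_map]
  rintro _ (⟨p, hp, rfl⟩ | ⟨p, hp, rfl⟩) h
  · exact hL p hp (Fin.castAdd_injective _ _ h)
  · exact hL p hp (Fin.natAdd_injective _ _ h)

lemma ne_of_mem_shearPairs : ∀ p ∈ shearPairs n, p.1 ≠ p.2 := by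
  simp only [shearPairs, List.mem_map]
  rintro _ ⟨i, -, rfl⟩ h
  have := congrArg Fin.val h
  simp only [Fin.val_natAdd, Fin.val_castAdd] at this
  exact absurd i.isLt (by omega)

end Doubling

section Triangularization

variable {R : Type*} [CommRing R]

def UpperTriangularizableIn {n : ℕ} (t : ℕ) (M : Matrix (Fin n) (Fin n) R) : Prop :=
  ∃ Lrow Lcol : List (Fin n × Fin n), (∀ p ∈ Lrow, p.1 ≠ p.2) ∧ (∀ p ∈ Lcol, p.1 ≠ p.2) ∧
    Lrow.length + Lcol.length = t ∧
    (transvectionProd Lrow * M * transvectionProd Lcol).IsUpperTriangular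

lemma fromBlocks_shear_mul_mul_shear {α ι : Type*} [Ring α] [CharP α 2] [Fintype ι]
    [DecidableEq ι] (A B : Matrix ι ι α) :
    fromBlocks 1 0 1 1 * fromBlocks A B B A * fromBlocks 1 0 1 1 =
      fromBlocks (A + B) B 0 (A + B) := by
  have h : A + B + (A + B) = 0 := by ext i j; exact CharTwo.add_self_eq_zero ((A + B) i j)
  simp [fromBlocks_multiply, add_comm B A, h]

lemma blockTriangular_fromBlocks_finSumFinEquiv {α : Type*} [Zero α] {n : ℕ}
    {X Y Z : Matrix (Fin n) (Fin n) α}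
    (hX : X.IsUpperTriangular) (hZ : Z.IsUpperTriangular) :
    (fromBlocks X Y 0 Z).BlockTriangular finSumFinEquiv := by
  rintro (i | i) (j | j) hij
  · exact hX hij
  · simp [Fin.lt_def] at hij; omega
  · rfl
  · exact hZ ((Fin.natAdd_lt_natAdd_iff n).mp hij)

theorem UpperTriangularizableIn.of_reindex_eq_fromBlocks [CharP R 2] {n t : ℕ}
    {A B : Matrix (Fin n) (Fin n) R} (hAB : UpperTriangularizableIn t (A + B))
    {M : Matrix (Fin (n + n)) (Fin (n + n)) R}
    (hM : reindex finSumFinEquiv.symm finSumFinEquiv.symm M = fromBlocks A B B A) :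
    UpperTriangularizableIn (2 * t + 2 * n) M := by
  obtain ⟨Lr, Lc, hr, hc, hlen, htri⟩ := hAB
  refine ⟨blockDiagPairs Lr ++ shearPairs n, shearPairs n ++ blockDiagPairs Lc, ?_, ?_, ?_, ?_⟩
  · exact List.forall_mem_append.mpr ⟨ne_of_mem_blockDiagPairs hr, ne_of_mem_shearPairs⟩
  · exact List.forall_mem_append.mpr ⟨ne_of_mem_shearPairs, ne_of_mem_blockDiagPairs hc⟩
  · simp [blockDiagPairs, shearPairs]; omega
  · set P : Matrix (Fin n) (Fin n) R := transvectionProd Lr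
    set Q : Matrix (Fin n) (Fin n) R := transvectionProd Lc
    have hM' : M = reindex finSumFinEquiv finSumFinEquiv (fromBlocks A B B A) := by
      rw [← hM, ← reindex_symm, Equiv.apply_symm_apply]
    have hprod : transvectionProd (blockDiagPairs Lr ++ shearPairs n) * M *
        transvectionProd (shearPairs n ++ blockDiagPairs Lc) =
        reindex finSumFinEquiv finSumFinEquiv (fromBlocks P 0 0 P *
          (fromBlocks 1 0 1 1 * fromBlocks A B B A * fromBlocks 1 0 1 1) * fromBlocks Q 0 0 Q) := by
      simp only [transvectionProd_append, transvectionProd_blockDiagPairs,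
        transvectionProd_shearPairs, hM', ← coe_reindexAlgEquiv R R, ← map_mul, Matrix.mul_assoc]
      rfl
    have hblocks : fromBlocks P 0 0 P * fromBlocks (A + B) B 0 (A + B) * fromBlocks Q 0 0 Q =
        fromBlocks (P * (A + B) * Q) (P * B * Q) 0 (P * (A + B) * Q) := by
      simp [fromBlocks_multiply]
    rw [hprod, fromBlocks_shear_mul_mul_shear, hblocks, IsUpperTriangular,
      blockTriangular_reindex_iff]
    exact blockTriangular_fromBlocks_finSumFinEquiv htri htri

theorem upperTriangularizableIn_circulant_fin_add [CharP R 2] {n t : ℕ}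
    (h : ∀ v : Fin n → R, UpperTriangularizableIn t (circulant v)) (v : Fin (n + n) → R) :
    UpperTriangularizableIn (2 * t + 2 * n) (circulant v) := by
  have hAB := h fun d => v (Fin.castAdd n d) + v (Fin.natAdd n d)
  rw [← circulant_submatrix_castAdd_add] at hAB
  exact hAB.of_reindex_eq_fromBlocks (reindex_circulant_fin_add v)

theorem upperTriangularizableIn_circulant_two_pow [CharP R 2] (k : ℕ) (v : Fin (2 ^ k) → R) :
    UpperTriangularizableIn (k * 2 ^ k) (circulant v) := by
  induction k with
  | zero => exact ⟨[], [], by simp, by simp, rfl, fun i j hij => by omega⟩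
  | succ k ih =>
    rw [show (k + 1) * 2 ^ (k + 1) = 2 * (k * 2 ^ k) + 2 * 2 ^ k by ring]
    revert v
    rw [show 2 ^ (k + 1) = 2 ^ k + 2 ^ k by ring]
    exact upperTriangularizableIn_circulant_fin_add ih

end Triangularization

theorem circulant_to_upper_triangular_general (k : ℕ)
    (M : Matrix (Fin (2 ^ k)) (Fin (2 ^ k)) (Polynomial (ZMod 2)))
    (hM : ∃ v : Fin (2 ^ k) → Polynomial (ZMod 2), M = Matrix.circulant v) :
    ∃ Lrow Lcol : List (Fin (2 ^ k) × Fin (2 ^ k)),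
      (∀ p ∈ Lrow, p.1 ≠ p.2) ∧
      (∀ p ∈ Lcol, p.1 ≠ p.2) ∧
      Lrow.length + Lcol.length = k * 2 ^ k ∧
      (∀ i j : Fin (2 ^ k), (j : ℕ) < (i : ℕ) →
        ((Lrow.map fun p => elemAddPoly (2 ^ k) p.1 p.2).prod * M *
          (Lcol.map fun p => elemAddPoly (2 ^ k) p.1 p.2).prod) i j = 0) := by
  obtain ⟨v, rfl⟩ := hM
  obtain ⟨Lrow, Lcol, hrow, hcol, hlen, htri⟩ := upperTriangularizableIn_circulant_two_pow k v
  exact ⟨Lrow, Lcol, hrow, hcol, hlen, fun i j hij => htri hij⟩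

/-- A `2^k × 2^k` circulant matrix over `F_2[x]` can be transformed into an
upper-triangular matrix using `k·2^k` elementary row/column addition operations. -/
theorem circulant_to_upper_triangular (k : ℕ) (hk : 1 ≤ k)
    (M : Matrix (Fin (2 ^ k)) (Fin (2 ^ k)) (Polynomial (ZMod 2)))
    (hM : ∃ v : Fin (2 ^ k) → Polynomial (ZMod 2), M = Matrix.circulant v) :
    ∃ Lrow Lcol : List (Fin (2 ^ k) × Fin (2 ^ k)),
      (∀ p ∈ Lrow, p.1 ≠ p.2) ∧
      (∀ p ∈ Lcol, p.1 ≠ p.2) ∧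
      Lrow.length + Lcol.length = k * 2 ^ k ∧
      (∀ i j : Fin (2 ^ k), (j : ℕ) < (i : ℕ) →
        ((Lrow.map fun p => elemAddPoly (2 ^ k) p.1 p.2).prod * M *
          (Lcol.map fun p => elemAddPoly (2 ^ k) p.1 p.2).prod) i j = 0) :=
  circulant_to_upper_triangular_general k M hM
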